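/- Let K be a field of prime characteristic p, for k ≥ 0 set τ_k = Σ_{r=0}^{k} X^{p^r + p^{2r}} ∈ K[X], and let i ≥ 1 be an integer. Let E_i ⊆ K[X] be the set of all polynomials X^j · ∂_{p^k}(τ_k) with 0 ≤ k ≤ i, j ≥ 0 and j + p^k ≤ p^i. Then the K-vector space spanned by E_i has dimension at least Σ_{k=⌈i/2⌉}^{i} (p^i − p^k). -/

import Mathlib

/-!
For `k ≥ 1` the Hasse derivative `∂_{p^k} τ_k` has degree exactly `p^{2k}`: its coefficient there
is `(p^k + p^{2k} choose p^k)`, which is `1` in characteristic `p` because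
`(X + 1)^{p^k + p^{2k}} = (X^{p^k} + 1)(X^{p^{2k}} + 1)`. For `⌈i/2⌉ ≤ k ≤ i` and
`j < p^i - p^k ≤ p^{2k}` the elements `X^j ∂_{p^k} τ_k` of `E_i` therefore have degrees
`j + p^{2k}` in `[p^{2k}, 2 p^{2k})`, intervals that are disjoint for distinct `k`. Polynomials of
pairwise distinct degrees are linearly independent, and there are `Σ_{k=⌈i/2⌉}^{i} (p^i − p^k)` of
them.
-/

open Polynomial Finset

theorem Polynomial.linearIndependent_of_injective_natDegree {R ι : Type*} [CommRing R]
    [IsDomain R] (f : ι → R[X]) (hf : ∀ x, f x ≠ 0)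
    (hd : Function.Injective (natDegree ∘ f)) :
    LinearIndependent R f := by
  classical
  rw [linearIndependent_iff']
  intro s c hsum x hx
  have hdisj : Set.Pairwise {y | y ∈ s ∧ c y • f y ≠ 0}
      (Function.onFun (· ≠ ·) (degree ∘ fun y => c y • f y)) := by
    rintro y ⟨-, hy⟩ z ⟨-, hz⟩ hyz
    have hdeg : ∀ {y}, c y • f y ≠ 0 → (c y • f y).degree = (f y).natDegree := fun h =>
      (degree_smul_of_isRightRegular_leadingCoeff (smul_ne_zero_iff.mp h).1
        (IsRegular.of_ne_zero (leadingCoeff_ne_zero.mpr (hf _))).right).trans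
        (degree_eq_natDegree (hf _))
    simpa [Function.onFun, hdeg hy, hdeg hz] using hd.ne hyz
  have hsup := degree_sum_eq_of_disjoint _ s hdisj
  rw [hsum, degree_zero, eq_comm, Finset.sup_eq_bot_iff] at hsup
  simpa [hf x] using hsup x hx

theorem Nat.eq_of_add_pow_eq_add_pow {p a b j l : ℕ} (hp : 1 < p) (hj : j < p ^ a)
    (hl : l < p ^ b) (h : j + p ^ a = l + p ^ b) : a = b ∧ j = l := by
  have key : ∀ {a b j : ℕ}, j < p ^ a → a < b → j + p ^ a < p ^ b := fun {a b j} hj hab =>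
    calc j + p ^ a < 2 * p ^ a := by omega
      _ ≤ p ^ (a + 1) := by rw [pow_succ']; exact Nat.mul_le_mul_right _ hp
      _ ≤ p ^ b := Nat.pow_le_pow_right (by omega) hab
  rcases lt_trichotomy a b with hab | rfl | hab
  · have := key hj hab; omega
  · omega
  · have := key hl hab; omega

theorem cast_choose_pow_add_pow {R : Type*} [CommRing R] {p : ℕ} [Fact p.Prime] [CharP R p]
    {a b : ℕ} (hab : a < b) : ((p ^ a + p ^ b).choose (p ^ a) : R) = 1 := by
  have hp : p.Prime := Fact.out
  have hfrob : (X + 1 : R[X]) ^ (p ^ a + p ^ b) =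
      X ^ (p ^ a + p ^ b) + X ^ p ^ a + X ^ p ^ b + 1 := by
    rw [pow_add, add_pow_char_pow, add_pow_char_pow, one_pow, one_pow, pow_add]
    ring
  have hpa : 0 < p ^ a := pow_pos hp.pos a
  have hab' : p ^ a < p ^ b := Nat.pow_lt_pow_right hp.one_lt hab
  simpa [coeff_X_add_one_pow, coeff_X_pow, coeff_one, hpa.ne', hab'.ne, hp.ne_zero]
    using congrArg (coeff · (p ^ a)) hfrob

noncomputable def tau (K : Type*) [Semiring K] (p k : ℕ) : K[X] :=
  ∑ r ∈ range (k + 1), X ^ (p ^ r + p ^ (2 * r))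

section tau

variable {K : Type*}

theorem natDegree_tau_le [Semiring K] {p : ℕ} (hp : 0 < p) (k : ℕ) :
    (tau K p k).natDegree ≤ p ^ k + p ^ (2 * k) := by
  refine natDegree_sum_le_of_forall_le _ _ fun r hr => (natDegree_X_pow_le _).trans ?_
  have hrk : r ≤ k := Nat.lt_succ_iff.mp (mem_range.mp hr)
  exact Nat.add_le_add (Nat.pow_le_pow_right hp hrk) (Nat.pow_le_pow_right hp (by omega))

theorem coeff_tau_self [Semiring K] {p : ℕ} (hp : 1 < p) (k : ℕ) :
    (tau K p k).coeff (p ^ k + p ^ (2 * k)) = 1 := by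
  have hmono : StrictMono fun r : ℕ => p ^ r + p ^ (2 * r) := fun r s hrs =>
    Nat.add_lt_add (Nat.pow_lt_pow_right hp hrs) (Nat.pow_lt_pow_right hp (by omega))
  rw [tau, finsetSum_coeff, sum_eq_single k]
  · simp
  · intro r _ hrk
    simp [coeff_X_pow, hmono.injective.ne (Ne.symm hrk)]
  · simp

variable [CommRing K] {p : ℕ} [Fact p.Prime] [CharP K p]

theorem coeff_hasseDeriv_tau {k : ℕ} (hk : 0 < k) :
    (hasseDeriv (p ^ k) (tau K p k)).coeff (p ^ (2 * k)) = 1 := by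
  rw [hasseDeriv_coeff, add_comm, coeff_tau_self (Fact.out : p.Prime).one_lt, mul_one]
  exact cast_choose_pow_add_pow (by omega)

theorem natDegree_hasseDeriv_tau [Nontrivial K] {k : ℕ} (hk : 0 < k) :
    (hasseDeriv (p ^ k) (tau K p k)).natDegree = p ^ (2 * k) := by
  refine le_antisymm ((natDegree_hasseDeriv_le _ _).trans ?_) (le_natDegree_of_ne_zero ?_)
  · have := natDegree_tau_le (K := K) (Fact.out : p.Prime).pos k
    omega
  · rw [coeff_hasseDeriv_tau hk]
    exact one_ne_zero

end tau

def E (K : Type*) [Semiring K] (p i : ℕ) : Set K[X] :=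
  {f | ∃ j k : ℕ, k ≤ i ∧ j + p ^ k ≤ p ^ i ∧ f = X ^ j * hasseDeriv (p ^ k) (tau K p k)}

theorem E_finite (K : Type*) [Semiring K] (p i : ℕ) : (E K p i).Finite := by
  refine ((Set.finite_Iic (p ^ i)).image2 (fun j k => X ^ j * hasseDeriv (p ^ k) (tau K p k))
    (Set.finite_Iic i)).subset ?_
  rintro f ⟨j, k, hk, hjk, rfl⟩
  exact ⟨j, by simp only [Set.mem_Iic]; omega, k, hk, rfl⟩

def independentPairs (p i : ℕ) : Finset (Σ _ : ℕ, ℕ) :=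
  (Icc ((i + 1) / 2) i).sigma fun k => range (p ^ i - p ^ k)

theorem card_independentPairs (p i : ℕ) :
    #(independentPairs p i) = ∑ k ∈ Icc ((i + 1) / 2) i, (p ^ i - p ^ k) := by
  simp [independentPairs]

theorem bounds_of_mem_independentPairs {p i : ℕ} (hp : 1 < p) {x : Σ _ : ℕ, ℕ}
    (hx : x ∈ independentPairs p i) :
    0 < x.1 ∧ x.1 ≤ i ∧ x.2 + p ^ x.1 ≤ p ^ i ∧ x.2 < p ^ (2 * x.1) := by
  simp only [independentPairs, mem_sigma, mem_Icc, mem_range] at hx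
  obtain ⟨⟨hmk, hki⟩, hj⟩ := hx
  have hpk : p ^ x.1 < p ^ i := by omega
  have hlt : x.1 < i := (Nat.pow_lt_pow_iff_right hp).mp hpk
  have hpi : p ^ i ≤ p ^ (2 * x.1) := Nat.pow_le_pow_right (by omega) (by omega)
  omega

theorem linearIndependent_independentPairs (K : Type*) [Field K] (p : ℕ) [Fact p.Prime]
    [CharP K p] (i : ℕ) :
    LinearIndependent K fun x : independentPairs p i =>
      X ^ x.1.2 * hasseDeriv (p ^ x.1.1) (tau K p x.1.1) := by
  have hp : 1 < p := (Fact.out : p.Prime).one_lt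
  have hD : ∀ x : independentPairs p i, hasseDeriv (p ^ x.1.1) (tau K p x.1.1) ≠ 0 :=
    fun x h => by
      simpa [h] using coeff_hasseDeriv_tau (K := K) (bounds_of_mem_independentPairs hp x.2).1
  refine linearIndependent_of_injective_natDegree _
    (fun x => mul_ne_zero (pow_ne_zero _ X_ne_zero) (hD x)) fun x y hxy => ?_
  have hx := bounds_of_mem_independentPairs hp x.2
  have hy := bounds_of_mem_independentPairs hp y.2
  simp only [Function.comp_apply, natDegree_mul (pow_ne_zero _ X_ne_zero) (hD _),
    natDegree_X_pow, natDegree_hasseDeriv_tau hx.1, natDegree_hasseDeriv_tau hy.1] at hxy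
  obtain ⟨hk, hj⟩ := Nat.eq_of_add_pow_eq_add_pow hp hx.2.2.2 hy.2.2.2 hxy
  exact Subtype.ext (Sigma.ext (by omega) (heq_of_eq hj))

theorem dim_span_E_ge_general (K : Type*) [Field K] (p : ℕ) [Fact p.Prime] [CharP K p]
    (i : ℕ) :
    ∑ k ∈ Finset.Icc ((i + 1) / 2) i, (p ^ i - p ^ k) ≤
      Module.finrank K
        (Submodule.span K
          {f : K[X] | ∃ j k : ℕ, k ≤ i ∧ j + p ^ k ≤ p ^ i ∧
            f = X ^ j * Polynomial.hasseDeriv (p ^ k)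
              (∑ r ∈ Finset.range (k + 1), (X : K[X]) ^ (p ^ r + p ^ (2 * r)))}) := by
  change _ ≤ Module.finrank K (Submodule.span K (E K p i))
  have hp : 1 < p := (Fact.out : p.Prime).one_lt
  have : FiniteDimensional K (Submodule.span K (E K p i)) :=
    FiniteDimensional.span_of_finite K (E_finite K p i)
  calc ∑ k ∈ Icc ((i + 1) / 2) i, (p ^ i - p ^ k)
      = Module.finrank K (Submodule.span K (Set.range fun x : independentPairs p i =>
          X ^ x.1.2 * hasseDeriv (p ^ x.1.1) (tau K p x.1.1))) := by
        rw [finrank_span_eq_card (linearIndependent_independentPairs K p i), Fintype.card_coe,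
          card_independentPairs]
    _ ≤ Module.finrank K (Submodule.span K (E K p i)) := by
        refine Submodule.finrank_mono <|
          Submodule.span_mono (Set.range_subset_iff.mpr fun x => ?_)
        have hx := bounds_of_mem_independentPairs hp x.2
        exact ⟨x.1.2, x.1.1, hx.2.1, hx.2.2.1, rfl⟩

/-- Dimension estimate in the proof of Theorem 3.2: with
`τ_k = Σ_{r=0}^{k} X^{p^r + p^{2r}}` in `K[X]` and `E_i` the set of all polynomials
`X^j · ∂_{p^k}(τ_k)` with `0 ≤ k ≤ i` and `j + p^k ≤ p^i`, the `K`-span of `E_i` has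
dimension at least `Σ_{k=⌈i/2⌉}^{i} (p^i − p^k)`. -/
theorem dim_span_E_ge (K : Type*) [Field K] (p : ℕ) [Fact p.Prime] [CharP K p]
    (i : ℕ) (hi : 1 ≤ i) :
    ∑ k ∈ Finset.Icc ((i + 1) / 2) i, (p ^ i - p ^ k) ≤
      Module.finrank K
        (Submodule.span K
          {f : K[X] | ∃ j k : ℕ, k ≤ i ∧ j + p ^ k ≤ p ^ i ∧
            f = X ^ j * Polynomial.hasseDeriv (p ^ k)
              (∑ r ∈ Finset.range (k + 1), (X : K[X]) ^ (p ^ r + p ^ (2 * r)))}) :=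
  dim_span_E_ge_general K p i
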